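/- arXiv:2404.03981 — 5 statements merged into one kernel-verified Lean document; each statement's English description precedes it below -/
import Mathlib

section
/- For every f ≥ 1, ε ∈ (0,1], and δℓ > 0 there exists δc > 0 with the following property. Let P₁,…,Pₙ ⊆ [0,1]² be pairwise disjoint convex sets such that for each i there exist a point cᵢ ∈ ℝ² and a radius ρᵢ ≥ δℓ with the closed Euclidean disk of radius ρᵢ centered at cᵢ contained in Pᵢ, and such that Pᵢ is contained in some closed disk of radius f·ρᵢ. Then there exist translation vectors v₁,…,vₙ ∈ ℝ² such that the translates vᵢ + Pᵢ are pairwise disjoint, each contained in [0,1+ε]², and no closed grid square [j·δc,(j+1)·δc] × [k·δc,(k+1)·δc] (with j,k ∈ ℤ) intersects two distinct translates. -/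
open Metric Set
open scoped Pointwise

noncomputable section

/-- The plane ℝ² with the Euclidean metric. -/
abbrev Plane := EuclideanSpace ℝ (Fin 2)

/-- The axis-parallel square `[0,t] × [0,t]` in the plane. -/
def square (t : ℝ) : Set Plane := {x | x 0 ∈ Icc (0:ℝ) t ∧ x 1 ∈ Icc (0:ℝ) t}

/-- The closed grid square `[j·δc,(j+1)·δc] × [k·δc,(k+1)·δc]`. -/
def gridSquare (δc : ℝ) (j k : ℤ) : Set Plane :=
  {x | x 0 ∈ Icc ((j:ℝ) * δc) (((j:ℝ) + 1) * δc) ∧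
       x 1 ∈ Icc ((k:ℝ) * δc) (((k:ℝ) + 1) * δc)}

/-! Translate each object `P` by `ε • c`, where `c` is the centre of its inscribed disk of
radius `ρ`. Since `P` is convex, `(1 + ε) • P = P + ε • P ⊇ P + closedBall (ε • c) (ε * ρ)`,
so the `ε * ρ`-neighbourhood of `ε • c +ᵥ P` lies in `(1 + ε) • P ⊆ square (1 + ε)`.
Dilation preserves disjointness, hence points of distinct translates are more than
`2 * ε * δℓ` apart, while a grid square of side `ε * δℓ` has diameter
`√2 * ε * δℓ ≤ 2 * ε * δℓ`. -/

section
variable {E : Type*} [NormedAddCommGroup E] [NormedSpace ℝ E]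

theorem Convex.closedBall_subset_one_add_smul {P : Set E} (hP : Convex ℝ P)
    {c x : E} {ρ ε : ℝ} (hε : 0 < ε) (hball : closedBall c ρ ⊆ P) (hx : x ∈ ε • c +ᵥ P) :
    closedBall x (ε * ρ) ⊆ (1 + ε) • P := by
  obtain ⟨p, hp, rfl⟩ := hx
  intro z hz
  have hshift : ε • c + (z - (ε • c + p)) ∈ ε • P := by
    refine smul_set_mono hball ?_
    rw [smul_closedBall' hε.ne', Real.norm_of_nonneg hε.le]
    simpa [dist_eq_norm] using hz
  rw [hP.add_smul zero_le_one hε.le, one_smul]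
  exact ⟨p, hp, _, hshift, by dsimp only; abel⟩

theorem Convex.two_mul_lt_dist_of_disjoint {P Q : Set E} (hP : Convex ℝ P) (hQ : Convex ℝ Q)
    (hPQ : Disjoint P Q) {c d x y : E} {ρ σ ε r : ℝ} (hε : 0 < ε)
    (hρ : r ≤ ε * ρ) (hσ : r ≤ ε * σ) (hPc : closedBall c ρ ⊆ P) (hQd : closedBall d σ ⊆ Q)
    (hx : x ∈ ε • c +ᵥ P) (hy : y ∈ ε • d +ᵥ Q) : 2 * r < dist x y := by
  by_contra! hxy
  have hdisj : Disjoint ((1 + ε) • P) ((1 + ε) • Q) := by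
    rw [disjoint_iff_inter_eq_empty, ← smul_set_inter₀ (by positivity), hPQ.inter_eq,
      smul_set_empty]
  have hxm : midpoint ℝ x y ∈ closedBall x (ε * ρ) := by
    rw [mem_closedBall, dist_midpoint_left]; norm_num; linarith
  have hym : midpoint ℝ x y ∈ closedBall y (ε * σ) := by
    rw [mem_closedBall, dist_midpoint_right]; norm_num; linarith
  exact hdisj.ne_of_mem
    (hP.closedBall_subset_one_add_smul hε hPc hx hxm)
    (hQ.closedBall_subset_one_add_smul hε hQd hy hym) rfl
end

theorem dist_le_two_mul_of_mem_gridSquare {δc : ℝ} {j k : ℤ} {x y : Plane}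
    (hx : x ∈ gridSquare δc j k) (hy : y ∈ gridSquare δc j k) : dist x y ≤ 2 * δc := by
  have hδc : 0 ≤ δc := by nlinarith [hx.1.1.trans hx.1.2]
  have h0 : dist (x 0) (y 0) ≤ δc := (Real.dist_le_of_mem_Icc hx.1 hy.1).trans_eq (by ring)
  have h1 : dist (x 1) (y 1) ≤ δc := (Real.dist_le_of_mem_Icc hx.2 hy.2).trans_eq (by ring)
  rw [EuclideanSpace.dist_eq, Fin.sum_univ_two, Real.sqrt_le_iff]
  refine ⟨by positivity, ?_⟩
  nlinarith [dist_nonneg (x := x 0) (y := y 0), dist_nonneg (x := x 1) (y := y 1)]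

theorem smul_square_subset {s t : ℝ} (hs : 0 ≤ s) : s • square t ⊆ square (s * t) := by
  rintro _ ⟨z, ⟨⟨h00, h0t⟩, ⟨h10, h1t⟩⟩, rfl⟩
  simp only [square, mem_Icc]
  exact ⟨⟨mul_nonneg hs h00, mul_le_mul_of_nonneg_left h0t hs⟩,
    ⟨mul_nonneg hs h10, mul_le_mul_of_nonneg_left h1t hs⟩⟩

theorem discretized_packing_of_large_fat_convex_general
    (f : ℝ) (ε : ℝ) (hε0 : 0 < ε)
    (δℓ : ℝ) (hδℓ : 0 < δℓ) :
    ∃ δc : ℝ, 0 < δc ∧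
      ∀ (n : ℕ) (P : Fin n → Set Plane),
        (∀ i, Convex ℝ (P i)) →
        (∀ i j, i ≠ j → Disjoint (P i) (P j)) →
        (∀ i, P i ⊆ square 1) →
        (∀ i, ∃ (c : Plane) (ρ : ℝ), δℓ ≤ ρ ∧ closedBall c ρ ⊆ P i ∧
          ∃ c' : Plane, P i ⊆ closedBall c' (f * ρ)) →
        ∃ v : Fin n → Plane,
          (∀ i j, i ≠ j → Disjoint (v i +ᵥ P i) (v j +ᵥ P j)) ∧
          (∀ i, v i +ᵥ P i ⊆ square (1 + ε)) ∧
          (∀ (j k : ℤ) (i i' : Fin n), i ≠ i' →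
            ¬((gridSquare δc j k ∩ (v i +ᵥ P i)).Nonempty ∧
              (gridSquare δc j k ∩ (v i' +ᵥ P i')).Nonempty)) := by
  refine ⟨ε * δℓ, by positivity, fun n P hconv hdisj hsub hfat => ?_⟩
  choose c ρ hρ hball _ using hfat
  have hsep : ∀ i j, i ≠ j → ∀ x ∈ ε • c i +ᵥ P i, ∀ y ∈ ε • c j +ᵥ P j,
      2 * (ε * δℓ) < dist x y := fun i j hij x hx y hy =>
    (hconv i).two_mul_lt_dist_of_disjoint (hconv j) (hdisj i j hij) hε0
      (by gcongr; exact hρ i) (by gcongr; exact hρ j) (hball i) (hball j) hx hy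
  refine ⟨fun i => ε • c i, fun i j hij => ?_, fun i => ?_, ?_⟩
  · refine Set.disjoint_left.2 fun x hxi hxj => (hsep i j hij x hxi x hxj).not_ge ?_
    rw [dist_self]; positivity
  · have hρ0 : 0 ≤ ε * ρ i := mul_nonneg hε0.le (hδℓ.le.trans (hρ i))
    calc ε • c i +ᵥ P i ⊆ (1 + ε) • P i := fun x hx =>
          (hconv i).closedBall_subset_one_add_smul hε0 (hball i) hx
            (mem_closedBall_self hρ0)
      _ ⊆ (1 + ε) • square 1 := smul_set_mono (hsub i)
      _ ⊆ square (1 + ε) := (smul_square_subset (by positivity)).trans_eq (by rw [mul_one])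
  · rintro j k i i' hii' ⟨⟨x, hxg, hx⟩, ⟨y, hyg, hy⟩⟩
    exact (hsep i i' hii' x hx y hy).not_ge (dist_le_two_mul_of_mem_gridSquare hxg hyg)

/-- Discretization lemma for large fat convex objects under resource augmentation:
for every `f ≥ 1`, `ε ∈ (0,1]`, `δℓ > 0` there is a grid width `δc > 0` such that any
packing of pairwise disjoint `f`-fat `δℓ`-large convex sets in the unit square can be
translated into the `(1+ε)`-augmented square so that no `δc`-grid square meets two
distinct objects. -/
theorem discretized_packing_of_large_fat_convex
    (f : ℝ) (hf : 1 ≤ f) (ε : ℝ) (hε0 : 0 < ε) (hε1 : ε ≤ 1)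
    (δℓ : ℝ) (hδℓ : 0 < δℓ) :
    ∃ δc : ℝ, 0 < δc ∧
      ∀ (n : ℕ) (P : Fin n → Set Plane),
        (∀ i, Convex ℝ (P i)) →
        (∀ i j, i ≠ j → Disjoint (P i) (P j)) →
        (∀ i, P i ⊆ square 1) →
        (∀ i, ∃ (c : Plane) (ρ : ℝ), δℓ ≤ ρ ∧ closedBall c ρ ⊆ P i ∧
          ∃ c' : Plane, P i ⊆ closedBall c' (f * ρ)) →
        ∃ v : Fin n → Plane,
          (∀ i j, i ≠ j → Disjoint (v i +ᵥ P i) (v j +ᵥ P j)) ∧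
          (∀ i, v i +ᵥ P i ⊆ square (1 + ε)) ∧
          (∀ (j k : ℤ) (i i' : Fin n), i ≠ i' →
            ¬((gridSquare δc j k ∩ (v i +ᵥ P i)).Nonempty ∧
              (gridSquare δc j k ∩ (v i' +ᵥ P i')).Nonempty)) :=
  discretized_packing_of_large_fat_convex_general f ε hε0 δℓ hδℓ
end
end

section
/- Let ε ∈ (0,1/2] and let P₁,…,Pₙ be pairwise disjoint convex subsets of the unit square [0,1]², each contained in some closed Euclidean disk of radius ε, with associated profits w₁,…,wₙ ≥ 0. Then there exist a subset S ⊆ {1,…,n} with Σ_{i∈S} wᵢ ≥ (1 − 6ε)·Σ_{i=1}^n wᵢ and translation vectors vᵢ ∈ ℝ² for i ∈ S such that the translates vᵢ + Pᵢ, i ∈ S, are pairwise disjoint and all contained in [0, 1−ε]². -/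
open Metric Set
open MeasureTheory
open scoped Pointwise

noncomputable section

lemma abs_coord_le (p c : Plane) (k : Fin 2) : |p k - c k| ≤ dist p c := by
  rw [EuclideanSpace.dist_eq]
  have h : |p k - c k| = Real.sqrt (dist (p k) (c k) ^ 2) := by
    rw [Real.sqrt_sq_eq_abs, Real.dist_eq, abs_abs]
  rw [h]
  exact Real.sqrt_le_sqrt (Finset.single_le_sum
    (f := fun i => dist (p i) (c i) ^ 2) (fun i _ => sq_nonneg _) (Finset.mem_univ k))

lemma avg_cut (ε : ℝ) (hε : 0 < ε) (n : ℕ) (A B : Fin n → ℝ)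
    (hA0 : ∀ i, 0 ≤ A i)
    (hBA : ∀ i, B i ≤ A i + 2*ε) (w : Fin n → ℝ) (hw : ∀ i, 0 ≤ w i) :
    ∃ u ∈ Ioc (0:ℝ) 1,
      ∑ i, (Icc (A i - ε) (B i) ∪ Icc (A i + 1 - ε) 1).indicator (fun _ => w i) u
        ≤ 3 * ε * ∑ i, w i := by
  classical
  set Bd : Fin n → Set ℝ := fun i => Icc (A i - ε) (B i) ∪ Icc (A i + 1 - ε) 1 with hBd
  have hmeas : ∀ i, MeasurableSet (Bd i) := fun i => measurableSet_Icc.union measurableSet_Icc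
  set g : ℝ → ℝ := fun u => ∑ i, (Bd i).indicator (fun _ => w i) u with hg
  have hfin : (g '' Ioc 0 1).Finite := by
    apply Set.Finite.subset (Set.finite_range (fun s : Finset (Fin n) => ∑ i ∈ s, w i))
    rintro _ ⟨u, _, rfl⟩
    refine ⟨Finset.univ.filter (fun i => u ∈ Bd i), ?_⟩
    show ∑ i ∈ Finset.univ.filter (fun i => u ∈ Bd i), w i = g u
    rw [hg, Finset.sum_filter]
    exact Finset.sum_congr rfl fun i _ => by simp [Set.indicator_apply]
  have hne : (g '' Ioc 0 1).Nonempty := ⟨g 1, 1, by norm_num, rfl⟩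
  obtain ⟨m, ⟨u₀, hu₀, rfl⟩, hmin⟩ := Set.exists_min_image _ id hfin hne
  refine ⟨u₀, hu₀, ?_⟩
  have hmin' : ∀ u ∈ Ioc (0:ℝ) 1, g u₀ ≤ g u := fun u hu => hmin (g u) ⟨u, hu, rfl⟩
  set μ := volume.restrict (Ioc (0:ℝ) 1) with hμ
  have hμfin : ∀ s : Set ℝ, μ s < ⊤ := by
    intro s
    calc μ s ≤ μ univ := measure_mono (subset_univ _)
    _ = volume (Ioc (0:ℝ) 1) := by rw [hμ, Measure.restrict_apply_univ]
    _ < ⊤ := by rw [Real.volume_Ioc]; exact ENNReal.ofReal_lt_top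
  have hind_int : ∀ i, Integrable ((Bd i).indicator (fun _ => w i)) μ := by
    intro i
    rw [integrable_indicator_iff (hmeas i)]
    exact integrableOn_const (hμfin _).ne
  have hgint : Integrable g μ := integrable_finset_sum _ (fun i _ => hind_int i)
  have key1 : ∫ u, g u ∂μ = ∑ i, w i * (volume (Bd i ∩ Ioc 0 1)).toReal := by
    rw [hg]
    rw [integral_finset_sum _ (fun i _ => hind_int i)]
    refine Finset.sum_congr rfl fun i _ => ?_
    rw [integral_indicator (hmeas i), setIntegral_const, hμ,
      measureReal_def, Measure.restrict_apply (hmeas i), smul_eq_mul, mul_comm]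
  have key2 : ∀ i, (volume (Bd i ∩ Ioc 0 1)).toReal ≤ 3 * ε := by
    intro i
    refine ENNReal.toReal_le_of_le_ofReal (by linarith) ?_
    have hsubset : Bd i ∩ Ioc 0 1 ⊆ Icc (max (A i - ε) 0) (min (B i) 1) ∪ Icc (A i + 1 - ε) 1 := by
      rintro u ⟨h1 | h2, hu⟩
      · exact Or.inl ⟨max_le h1.1 hu.1.le, le_min h1.2 hu.2⟩
      · exact Or.inr h2
    calc volume (Bd i ∩ Ioc 0 1)
        ≤ volume (Icc (max (A i - ε) 0) (min (B i) 1)) + volume (Icc (A i + 1 - ε) 1) :=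
          (measure_mono hsubset).trans (measure_union_le _ _)
      _ = ENNReal.ofReal (min (B i) 1 - max (A i - ε) 0) + ENNReal.ofReal (1 - (A i + 1 - ε)) := by
          rw [Real.volume_Icc, Real.volume_Icc]
      _ ≤ ENNReal.ofReal (3 * ε) := by
          rcases le_total ε (A i) with h | h
          · have h2 : ENNReal.ofReal (1 - (A i + 1 - ε)) = 0 :=
              ENNReal.ofReal_eq_zero.2 (by linarith)
            rw [h2, add_zero]
            refine ENNReal.ofReal_le_ofReal ?_
            have := min_le_left (B i) 1
            have := le_max_left (A i - ε) 0
            have := hBA i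
            linarith
          · have e1 : min (B i) 1 - max (A i - ε) 0 ≤ A i + 2*ε := by
              have := min_le_left (B i) 1
              have := le_max_right (A i - ε) 0
              have := hBA i
              linarith
            calc ENNReal.ofReal (min (B i) 1 - max (A i - ε) 0) + ENNReal.ofReal (1 - (A i + 1 - ε))
                ≤ ENNReal.ofReal (A i + 2*ε) + ENNReal.ofReal (ε - A i) :=
                  add_le_add (ENNReal.ofReal_le_ofReal e1) (ENNReal.ofReal_le_ofReal (by linarith))
              _ = ENNReal.ofReal (3 * ε) := by
                  rw [← ENNReal.ofReal_add (by linarith [hA0 i]) (by linarith)]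
                  ring_nf
  have key3 : g u₀ ≤ ∫ u, g u ∂μ := by
    have h1 : ∫ (_ : ℝ), g u₀ ∂μ ≤ ∫ u, g u ∂μ :=
      setIntegral_mono_on (integrable_const _) hgint measurableSet_Ioc hmin'
    have h2 : ∫ (_ : ℝ), g u₀ ∂μ = g u₀ := by
      rw [integral_const, hμ, measureReal_def, Measure.restrict_apply_univ, Real.volume_Ioc]
      norm_num
    linarith
  calc g u₀ ≤ ∫ u, g u ∂μ := key3
    _ = ∑ i, w i * (volume (Bd i ∩ Ioc 0 1)).toReal := key1
    _ ≤ ∑ i, w i * (3 * ε) := Finset.sum_le_sum fun i _ => mul_le_mul_of_nonneg_left (key2 i) (hw i)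
    _ = 3 * ε * ∑ i, w i := by rw [← Finset.sum_mul]; ring

/-- Structural core of the PTAS for small convex objects (Theorem 2.7): given pairwise
disjoint convex subsets of the unit square, each contained in a disk of radius `ε ≤ 1/2`,
with nonnegative profits, a subset carrying at least a `(1−6ε)`-fraction of the total
profit can be translated into the shrunken square `[0,1−ε]²`, keeping the translates
pairwise disjoint. -/
theorem small_objects_fit_in_shrunken_square
    (ε : ℝ) (hε0 : 0 < ε) (hε1 : ε ≤ 1/2)
    (n : ℕ) (P : Fin n → Set Plane)
    (hconv : ∀ i, Convex ℝ (P i))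
    (hdisj : ∀ i j, i ≠ j → Disjoint (P i) (P j))
    (hsub : ∀ i, P i ⊆ square 1)
    (hsmall : ∀ i, ∃ c : Plane, P i ⊆ closedBall c ε)
    (w : Fin n → ℝ) (hw : ∀ i, 0 ≤ w i) :
    ∃ (S : Finset (Fin n)) (v : Fin n → Plane),
      (1 - 6 * ε) * ∑ i, w i ≤ ∑ i ∈ S, w i ∧
      (∀ i ∈ S, ∀ j ∈ S, i ≠ j → Disjoint (v i +ᵥ P i) (v j +ᵥ P j)) ∧
      (∀ i ∈ S, v i +ᵥ P i ⊆ square (1 - ε)) := by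
  classical
  choose c hc using hsmall
  have hpk : ∀ (k : Fin 2) (i : Fin n), ∀ p ∈ P i, p k ∈ Icc (0:ℝ) 1 := by
    intro k i p hp
    have h := hsub i hp
    fin_cases k
    · exact h.1
    · exact h.2
  have hdist : ∀ (k : Fin 2) (i : Fin n), ∀ p ∈ P i, |p k - c i k| ≤ ε := fun k i p hp =>
    le_trans (abs_coord_le p (c i) k) (mem_closedBall.1 (hc i hp))
  set A : Fin 2 → Fin n → ℝ := fun k i => min (max (c i k - ε) 0) 1 with hA
  set B : Fin 2 → Fin n → ℝ := fun k i => max (min (c i k + ε) 1) 0 with hB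
  have hA1 : ∀ k i, A k i ≤ 1 := fun k i => min_le_right _ _
  have hA0 : ∀ (k : Fin 2) (i : Fin n), 0 ≤ A k i := fun k i => le_min (le_max_right _ _) zero_le_one
  have hBA : ∀ (k : Fin 2) (i : Fin n), B k i ≤ A k i + 2*ε := by
    intro k i
    rw [hA, hB]
    simp only [min_def, max_def]
    split_ifs <;> linarith
  have hmemAB : ∀ (k : Fin 2) i, ∀ p ∈ P i, A k i ≤ p k ∧ p k ≤ B k i := by
    intro k i p hp
    have h1 := hdist k i p hp
    have h2 := hpk k i p hp
    rw [abs_le] at h1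
    constructor
    · exact le_trans (min_le_left _ _) (max_le (by linarith [h1.2]) h2.1)
    · exact le_trans (le_min (by linarith [h1.1]) h2.2) (le_max_left _ _)
  set Bd : Fin 2 → Fin n → Set ℝ :=
    fun k i => Icc (A k i - ε) (B k i) ∪ Icc (A k i + 1 - ε) 1 with hBdd
  obtain ⟨t, ht, hwt⟩ := avg_cut ε hε0 n (A 0) (B 0) (hA0 0) (hBA 0) w hw
  obtain ⟨s, hs, hws⟩ := avg_cut ε hε0 n (A 1) (B 1) (hA0 1) (hBA 1) w hw
  set sh : Fin 2 → ℝ → Fin n → ℝ :=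
    fun k u i => if 1 - ε < u then 1 - ε - u else if B k i < u then 0 else -ε with hsh
  have contain : ∀ (k : Fin 2) (u : ℝ), u ∈ Ioc (0:ℝ) 1 → ∀ i, u ∉ Bd k i →
      ∀ p ∈ P i, sh k u i + p k ∈ Icc (0:ℝ) (1 - ε) := by
    intro k u hu i hbad p hp
    obtain ⟨hup, hu1⟩ := hu
    have hAB := hmemAB k i p hp
    have hp01 := hpk k i p hp
    rw [hBdd] at hbad
    simp only [Set.mem_union, not_or] at hbad
    obtain ⟨h1, h2⟩ := hbad
    have hA1' : u < A k i + 1 - ε := lt_of_not_ge fun h => h2 ⟨h, hu1⟩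
    rw [hsh]
    simp only
    rw [Set.mem_Icc]
    by_cases hcase : 1 - ε < u
    · rw [if_pos hcase]
      have hBlt : B k i < u := by
        rcases lt_or_ge u (A k i - ε) with h | h
        · exfalso; have := hA1 k i; linarith
        · exact lt_of_not_ge fun hub => h1 ⟨h, hub⟩
      constructor
      · linarith [hAB.1]
      · linarith [hAB.2]
    · rw [if_neg hcase]
      push_neg at hcase
      rcases lt_or_ge u (A k i - ε) with hL | hL
      · have hnb : ¬ (B k i < u) := not_lt.2 (by linarith [hAB.1, hAB.2])
        rw [if_neg hnb]
        constructor
        · linarith [hAB.1]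
        · linarith [hp01.2]
      · have hBlt : B k i < u := lt_of_not_ge fun hub => h1 ⟨hL, hub⟩
        rw [if_pos hBlt]
        constructor
        · linarith [hp01.1]
        · linarith [hAB.2]
  have sep : ∀ (k : Fin 2) (u : ℝ), u ∈ Ioc (0:ℝ) 1 → ∀ i j, u ∉ Bd k i → u ∉ Bd k j →
      sh k u i ≠ sh k u j → ∀ p ∈ P i, ∀ q ∈ P j, sh k u i + p k ≠ sh k u j + q k := by
    intro k u hu i j hbi hbj hne p hp q hq
    rw [hsh] at hne ⊢
    simp only at hne ⊢
    by_cases hcase : 1 - ε < u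
    · simp only [if_pos hcase] at hne; exact absurd rfl hne
    · simp only [if_neg hcase] at hne ⊢
      push_neg at hcase
      rw [hBdd] at hbi hbj
      simp only [Set.mem_union, not_or] at hbi hbj
      have hABi := hmemAB k i p hp
      have hABj := hmemAB k j q hq
      by_cases hi : B k i < u <;> by_cases hj : B k j < u
      · simp only [if_pos hi, if_pos hj] at hne; exact absurd rfl hne
      · simp only [if_pos hi, if_neg hj] at hne ⊢
        have hAj : u < A k j - ε := by
          rcases lt_or_ge u (A k j - ε) with h | h
          · exact h
          · exact absurd (lt_of_not_ge fun hub => hbj.1 ⟨h, hub⟩) hj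
        intro heq
        linarith [hABi.2, hABj.1]
      · simp only [if_neg hi, if_pos hj] at hne ⊢
        have hAi : u < A k i - ε := by
          rcases lt_or_ge u (A k i - ε) with h | h
          · exact h
          · exact absurd (lt_of_not_ge fun hub => hbi.1 ⟨h, hub⟩) hi
        intro heq
        linarith [hABj.2, hABi.1]
      · simp only [if_neg hi, if_neg hj] at hne; exact absurd rfl hne
  set badx := Finset.univ.filter (fun i => t ∈ Bd 0 i) with hbadx
  set bady := Finset.univ.filter (fun i => s ∈ Bd 1 i) with hbady
  set S := Finset.univ \ (badx ∪ bady) with hS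
  set v : Fin n → Plane :=
    fun i => (show Plane from WithLp.toLp 2 fun k => if k = 0 then sh 0 t i else sh 1 s i) with hv
  have hvk : ∀ i, v i 0 = sh 0 t i ∧ v i 1 = sh 1 s i := by
    intro i
    constructor <;> simp [hv]
  have hmemS : ∀ i ∈ S, t ∉ Bd 0 i ∧ s ∉ Bd 1 i := by
    intro i hi
    rw [hS, Finset.mem_sdiff, Finset.mem_union, not_or, hbadx, hbady,
      Finset.mem_filter, Finset.mem_filter] at hi
    exact ⟨fun h => hi.2.1 ⟨Finset.mem_univ i, h⟩, fun h => hi.2.2 ⟨Finset.mem_univ i, h⟩⟩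
  refine ⟨S, v, ?_, ?_, ?_⟩
  · -- weight bound
    have e1 : ∑ i ∈ badx, w i ≤ 3 * ε * ∑ i, w i := by
      rw [hbadx, Finset.sum_filter]
      refine le_trans (le_of_eq (Finset.sum_congr rfl fun i _ => ?_)) hwt
      simp [Set.indicator_apply, hBdd]
    have e2 : ∑ i ∈ bady, w i ≤ 3 * ε * ∑ i, w i := by
      rw [hbady, Finset.sum_filter]
      refine le_trans (le_of_eq (Finset.sum_congr rfl fun i _ => ?_)) hws
      simp [Set.indicator_apply, hBdd]
    have e3 : ∑ i ∈ badx ∪ bady, w i ≤ ∑ i ∈ badx, w i + ∑ i ∈ bady, w i := by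
      rw [← Finset.union_sdiff_self_eq_union, Finset.sum_union Finset.disjoint_sdiff]
      have h4 : ∑ i ∈ bady \ badx, w i ≤ ∑ i ∈ bady, w i :=
        Finset.sum_le_sum_of_subset_of_nonneg Finset.sdiff_subset (fun i _ _ => hw i)
      linarith
    have e4 : ∑ i ∈ S, w i = ∑ i, w i - ∑ i ∈ badx ∪ bady, w i := by
      rw [hS]
      have h5 := Finset.sum_sdiff (f := w) (Finset.subset_univ (badx ∪ bady))
      linarith
    rw [e4]
    linarith
  · -- disjointness
    intro i hi j hj hij
    obtain ⟨hix, hiy⟩ := hmemS i hi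
    obtain ⟨hjx, hjy⟩ := hmemS j hj
    rw [Set.disjoint_left]
    intro x hxi hxj
    rw [Set.mem_vadd_set] at hxi hxj
    obtain ⟨p, hp, hxp⟩ := hxi
    obtain ⟨q, hq, hxq⟩ := hxj
    have hpq : v i + p = v j + q := by
      rw [← vadd_eq_add, ← vadd_eq_add, hxp, hxq]
    rcases eq_or_ne (sh 0 t i) (sh 0 t j) with hx0 | hx0
    · rcases eq_or_ne (sh 1 s i) (sh 1 s j) with hy0 | hy0
      · have hvij : v i = v j := by
          rw [hv]
          simp only
          congr 1
          funext k
          split_ifs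
          · exact hx0
          · exact hy0
        rw [hvij] at hpq
        have hpq' : p = q := add_left_cancel hpq
        rw [hpq'] at hp
        exact (Set.disjoint_left.1 (hdisj i j hij) hp) hq
      · have hc1 : sh 1 s i + p 1 = sh 1 s j + q 1 := by
          have h := congrArg (fun z : Plane => z 1) hpq
          simpa [PiLp.add_apply, (hvk i).2, (hvk j).2] using h
        exact sep 1 s hs i j hiy hjy hy0 p hp q hq hc1
    · have hc0 : sh 0 t i + p 0 = sh 0 t j + q 0 := by
        have h := congrArg (fun z : Plane => z 0) hpq
        simpa [PiLp.add_apply, (hvk i).1, (hvk j).1] using h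
      exact sep 0 t ht i j hix hjx hx0 p hp q hq hc0
  · -- containment
    intro i hi x hx
    obtain ⟨hix, hiy⟩ := hmemS i hi
    rw [Set.mem_vadd_set] at hx
    obtain ⟨p, hp, hxp⟩ := hx
    rw [← hxp, vadd_eq_add]
    refine ⟨?_, ?_⟩
    · rw [PiLp.add_apply, (hvk i).1]
      exact contain 0 t ht i hix p hp
    · rw [PiLp.add_apply, (hvk i).2]
      exact contain 1 s hs i hiy p hp
end
end

section
/- Let ε ∈ (0,1/2], a > 0, and let B(c₁,r₁),…,B(cₙ,rₙ) be pairwise disjoint open Euclidean disks contained in the square [0,a]², with radii rᵢ ≤ ε·a and associated profits w₁,…,wₙ ≥ 0. Then there exist a subset S ⊆ {1,…,n} with Σ_{i∈S} wᵢ ≥ (1 − 6ε)·Σ_{i=1}^n wᵢ and translation vectors vᵢ ∈ ℝ² for i ∈ S such that the translated disks B(cᵢ + vᵢ, rᵢ), i ∈ S, are pairwise disjoint and all contained in [0,(1−ε)·a]². -/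
open Metric Set

noncomputable section

open MeasureTheory


lemma coord_dist (x y : Plane) (k : Fin 2) : |x k - y k| ≤ dist x y := by
  rw [EuclideanSpace.dist_eq]
  have h1 : |x k - y k| = Real.sqrt (dist (x k) (y k) ^ 2) := by
    rw [Real.sqrt_sq_eq_abs, Real.dist_eq, abs_abs]
  rw [h1]
  exact Real.sqrt_le_sqrt (Finset.single_le_sum
    (f := fun i => dist (x i) (y i) ^ 2) (fun i _ => sq_nonneg _) (Finset.mem_univ k))

lemma mem_square_coord {t : ℝ} {x : Plane} (h : x ∈ square t) (k : Fin 2) :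
    x k ∈ Icc (0:ℝ) t := by
  fin_cases k
  exacts [h.1, h.2]

lemma ball_coord_bounds {c : Plane} {r t : ℝ} (hr : 0 < r)
    (h : ball c r ⊆ square t) (k : Fin 2) :
    0 ≤ c k - r ∧ c k + r ≤ t := by
  have key : ∀ s : ℝ, |s| < r → 0 ≤ c k + s ∧ c k + s ≤ t := by
    intro s hs
    have hp : c + s • EuclideanSpace.single k (1:ℝ) ∈ ball c r := by
      rw [mem_ball, dist_eq_norm]
      have : c + s • EuclideanSpace.single k (1:ℝ) - c = s • EuclideanSpace.single k (1:ℝ) := by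
        abel
      rw [this, norm_smul, EuclideanSpace.norm_single]
      simpa using hs
    have hsq := mem_square_coord (h hp) k
    have happ : (c + s • EuclideanSpace.single k (1:ℝ)) k = c k + s := by
      rw [PiLp.add_apply, PiLp.smul_apply, EuclideanSpace.single_apply]
      simp
    rw [happ] at hsq
    exact ⟨hsq.1, hsq.2⟩
  have h1 : ∀ d : ℝ, 0 < d → c k + r ≤ t + d ∧ 0 ≤ c k - r + d := by
    intro d hd
    have hδ : 0 < min d r := lt_min hd hr
    have hδr : min d r ≤ r := min_le_right _ _
    have hmd : min d r ≤ d := min_le_left _ _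
    have habs : |r - min d r| < r := by
      rw [abs_of_nonneg (by linarith)]; linarith
    have habs2 : |(-(r - min d r))| < r := by rw [abs_neg]; exact habs
    have k1 := key _ habs
    have k2 := key _ habs2
    constructor
    · linarith [k1.2]
    · linarith [k2.1]
  constructor
  · have : (0:ℝ) ≤ (c k - r) + 0 ∨ True := Or.inr trivial
    refine le_of_forall_pos_le_add ?_
    intro d hd
    linarith [(h1 d hd).2]
  · refine le_of_forall_pos_le_add ?_
    intro d hd
    linarith [(h1 d hd).1]

lemma cut_1d {ε a t L R : ℝ} (hε0 : 0 < ε) (ht0 : 0 ≤ t) (hta : t < a)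
    (hL : 0 ≤ L) (hR : R ≤ a) (hLR : L < R)
    (hs1 : t ∉ Ioo (L - ε*a) R) (hs2 : t ∉ Ioo (L - ε*a + a) (R + a)) :
    ∀ x : ℝ, L + (if t + ε*a ≤ L then -(t + ε*a) else (1-ε)*a - t) < x →
      x < R + (if t + ε*a ≤ L then -(t + ε*a) else (1-ε)*a - t) →
      ((0 ≤ x ∧ x ≤ (1-ε)*a) ∧
       (t + ε*a ≤ L → x < a - ε*a - t) ∧ (¬ (t + ε*a ≤ L) → a - ε*a - t < x)) := by
  intro x hx1 hx2
  rw [mem_Ioo, not_and_or, not_lt, not_lt] at hs1 hs2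
  have hea : (1-ε)*a = a - ε*a := by ring
  by_cases hb : t + ε*a ≤ L
  · rw [if_pos hb] at hx1 hx2
    exact ⟨⟨by linarith, by linarith⟩, fun _ => by linarith, fun h => absurd hb h⟩
  · rw [if_neg hb] at hx1 hx2
    push_neg at hb
    have hRt : R ≤ t := by
      rcases hs1 with h | h
      · linarith
      · exact h
    have hLt : t + ε*a - a ≤ L := by
      rcases hs2 with h | h
      · linarith
      · linarith
    exact ⟨⟨by linarith, by linarith⟩, fun h => absurd h (not_le.mpr hb), fun _ => by linarith⟩

open Classical in
lemma exists_good_cut {ε a : ℝ} (hε0 : 0 < ε) (ha : 0 < a)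
    {n : ℕ} (A : Finset (Fin n)) (L R w : Fin n → ℝ) (hw : ∀ i, 0 ≤ w i)
    (hL : ∀ i ∈ A, 0 ≤ L i) (hR : ∀ i ∈ A, R i ≤ a)
    (hLR : ∀ i ∈ A, R i - L i ≤ 2 * (ε * a)) :
    ∃ t ∈ Ico (0:ℝ) a, ∃ B : Finset (Fin n), B ⊆ A ∧
      (∀ i ∈ A, i ∉ B →
        t ∉ Ioo (L i - ε*a) (R i) ∧ t ∉ Ioo (L i - ε*a + a) (R i + a)) ∧
      ∑ i ∈ B, w i ≤ 3 * ε * ∑ i, w i := by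
  set s : Set ℝ := Ico (0:ℝ) a with hs
  have hsm : MeasurableSet s := measurableSet_Ico
  have hsvol : volume s = ENNReal.ofReal a := by
    rw [hs, Real.volume_Ico, sub_zero]
  have hsfin : volume s < ⊤ := by rw [hsvol]; exact ENNReal.ofReal_lt_top
  set H : Fin n → Set ℝ :=
    fun i => Ioo (L i - ε*a) (R i) ∪ Ioo (L i - ε*a + a) (R i + a) with hH
  have hHm : ∀ i, MeasurableSet (H i) := fun i => measurableSet_Ioo.union measurableSet_Ioo
  -- measure bound
  have hvol : ∀ i ∈ A, (volume (s ∩ H i)).toReal ≤ 3 * (ε * a) := by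
    intro i hi
    have hLi := hL i hi
    have hRi := hR i hi
    have hLRi := hLR i hi
    have h1 : volume (s ∩ H i) ≤ ENNReal.ofReal (3 * (ε*a)) := by
      have hsub1 : s ∩ H i ⊆ (Ico (max (L i - ε*a) 0) (R i)) ∪ Ico (L i - ε*a + a) a := by
        rintro x ⟨⟨hx0, hxa⟩, hx⟩
        rcases hx with h | h
        · exact Or.inl ⟨max_le h.1.le hx0, h.2⟩
        · exact Or.inr ⟨h.1.le, hxa⟩
      have h2 : volume (s ∩ H i) ≤
          ENNReal.ofReal (R i - max (L i - ε*a) 0) + ENNReal.ofReal (a - (L i - ε*a + a)) := by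
        calc volume (s ∩ H i) ≤ volume ((Ico (max (L i - ε*a) 0) (R i)) ∪ Ico (L i - ε*a + a) a) :=
              measure_mono hsub1
          _ ≤ volume (Ico (max (L i - ε*a) 0) (R i)) + volume (Ico (L i - ε*a + a) a) :=
              measure_union_le _ _
          _ = _ := by rw [Real.volume_Ico, Real.volume_Ico]
      rcases le_or_gt (ε*a) (L i) with hc | hc
      · have hmax : max (L i - ε*a) 0 = L i - ε*a := max_eq_left (by linarith)
        rw [hmax] at h2
        refine h2.trans ?_
        have e1 : ENNReal.ofReal (R i - (L i - ε*a)) ≤ ENNReal.ofReal (3 * (ε*a)) :=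
          ENNReal.ofReal_le_ofReal (by linarith)
        have e2 : ENNReal.ofReal (a - (L i - ε*a + a)) = 0 := by
          rw [ENNReal.ofReal_eq_zero]; linarith
        rw [e2, add_zero]; exact e1
      · refine h2.trans ?_
        have e1 : ENNReal.ofReal (R i - max (L i - ε*a) 0) ≤ ENNReal.ofReal (2*(ε*a) + L i) :=
          ENNReal.ofReal_le_ofReal (by
            have : (0:ℝ) ≤ max (L i - ε*a) 0 := le_max_right _ _
            linarith)
        have e2 : ENNReal.ofReal (a - (L i - ε*a + a)) = ENNReal.ofReal (ε*a - L i) := by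
          congr 1; ring
        rw [e2]
        calc ENNReal.ofReal (R i - max (L i - ε*a) 0) + ENNReal.ofReal (ε*a - L i)
            ≤ ENNReal.ofReal (2*(ε*a) + L i) + ENNReal.ofReal (ε*a - L i) := by
              exact add_le_add_left e1 _
          _ = ENNReal.ofReal (3 * (ε*a)) := by
              rw [← ENNReal.ofReal_add (by positivity) (by linarith)]
              congr 1; ring
    exact ENNReal.toReal_le_of_le_ofReal (by positivity) h1
  -- the profit-of-hit function
  set F : ℝ → ℝ := fun t => ∑ i ∈ A, (H i).indicator (fun _ => w i) t with hF
  have hIint : ∀ i : Fin n, IntegrableOn ((H i).indicator (fun _ => w i)) s volume := by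
    intro i
    rw [IntegrableOn, integrable_indicator_iff (hHm i)]
    refine integrableOn_const (ne_of_lt ?_)
    calc (volume.restrict s) (H i) ≤ volume.restrict s univ := measure_mono (subset_univ _)
      _ = volume s := by rw [Measure.restrict_apply_univ]
      _ < ⊤ := hsfin
  have hFint : IntegrableOn F s volume := by
    rw [hF]; exact integrable_finset_sum A (fun i _ => hIint i)
  have hintF : ∫ t in s, F t ≤ 3 * (ε*a) * ∑ i, w i := by
    rw [hF]
    rw [integral_finset_sum A (fun i _ => hIint i)]
    have hterm : ∀ i ∈ A, ∫ t in s, (H i).indicator (fun _ => w i) t ≤ 3 * (ε*a) * w i := by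
      intro i hi
      rw [setIntegral_indicator (hHm i), setIntegral_const, smul_eq_mul]
      exact mul_le_mul_of_nonneg_right (hvol i hi) (hw i)
    calc ∑ i ∈ A, ∫ t in s, (H i).indicator (fun _ => w i) t ≤ ∑ i ∈ A, 3 * (ε*a) * w i :=
          Finset.sum_le_sum hterm
      _ = 3 * (ε*a) * ∑ i ∈ A, w i := by rw [Finset.mul_sum]
      _ ≤ 3 * (ε*a) * ∑ i, w i := by
          refine mul_le_mul_of_nonneg_left ?_ (by positivity)
          exact Finset.sum_le_sum_of_subset_of_nonneg (Finset.subset_univ _)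
            (fun i _ _ => hw i)
  -- find a good t
  have hgood : ∃ t ∈ s, F t ≤ 3 * ε * ∑ i, w i := by
    by_contra hcon
    push_neg at hcon
    set b : ℝ := 3 * ε * ∑ i, w i with hb
    have hbi : IntegrableOn (fun _ : ℝ => b) s volume := integrableOn_const (ne_of_lt hsfin)
    have hpos : 0 < ∫ t in s, (F t - b) := by
      refine (setIntegral_pos_iff_support_of_nonneg_ae ?_ (hFint.sub hbi)).2 ?_
      · filter_upwards [ae_restrict_mem hsm] with t ht
        have := hcon t ht
        simp only [Pi.zero_apply, Pi.sub_apply]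
        linarith
      · have hss : s ⊆ Function.support (fun t => F t - b) ∩ s := by
          intro t ht
          refine ⟨?_, ht⟩
          have := hcon t ht
          simp only [Function.mem_support]
          intro h0
          rw [sub_eq_zero] at h0
          rw [h0] at this
          exact lt_irrefl _ this
        calc (0:ENNReal) < volume s := by rw [hsvol]; simpa using ha
          _ ≤ _ := measure_mono hss
    have heq : ∫ t in s, (F t - b) = (∫ t in s, F t) - a * b := by
      rw [integral_sub hFint hbi, setIntegral_const, smul_eq_mul, measureReal_def, hsvol,
        ENNReal.toReal_ofReal ha.le]
    rw [heq] at hpos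
    have : a * b < ∫ t in s, F t := by linarith
    rw [hb] at this
    have hfin : 3 * (ε*a) * ∑ i, w i < 3 * (ε*a) * ∑ i, w i := by
      calc 3 * (ε*a) * ∑ i, w i = a * (3 * ε * ∑ i, w i) := by ring
        _ < ∫ t in s, F t := this
        _ ≤ 3 * (ε*a) * ∑ i, w i := hintF
    exact lt_irrefl _ hfin
  obtain ⟨t, hts, htF⟩ := hgood
  refine ⟨t, hts, A.filter (fun i => t ∈ H i), Finset.filter_subset _ _, ?_, ?_⟩
  · intro i hiA hiB
    have : t ∉ H i := by
      intro hmem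
      exact hiB (Finset.mem_filter.2 ⟨hiA, hmem⟩)
    rw [hH] at this
    simp only [mem_union] at this
    push_neg at this
    exact this
  · refine le_trans (le_of_eq ?_) htF
    rw [hF, Finset.sum_filter]
    refine Finset.sum_congr rfl ?_
    intro i _
    rw [Set.indicator_apply]

/-- Random-strip averaging lemma for small disks (Lemma 3.9): given pairwise disjoint
open disks in `[0,a]²` with radii at most `ε·a` (where `ε ≤ 1/2`) and nonnegative
profits, a subset carrying at least a `(1−6ε)`-fraction of the total profit can be
translated so that the translated disks are pairwise disjoint and contained in the
shrunken square `[0,(1−ε)·a]²`. -/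
theorem small_disks_fit_in_shrunken_cell
    (ε : ℝ) (hε0 : 0 < ε) (hε1 : ε ≤ 1/2) (a : ℝ) (ha : 0 < a)
    (n : ℕ) (c : Fin n → Plane) (r : Fin n → ℝ)
    (hr : ∀ i, r i ≤ ε * a)
    (hdisj : ∀ i j, i ≠ j → Disjoint (ball (c i) (r i)) (ball (c j) (r j)))
    (hsub : ∀ i, ball (c i) (r i) ⊆ square a)
    (w : Fin n → ℝ) (hw : ∀ i, 0 ≤ w i) :
    ∃ (S : Finset (Fin n)) (v : Fin n → Plane),
      (1 - 6 * ε) * ∑ i, w i ≤ ∑ i ∈ S, w i ∧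
      (∀ i ∈ S, ∀ j ∈ S, i ≠ j →
        Disjoint (ball (c i + v i) (r i)) (ball (c j + v j) (r j))) ∧
      (∀ i ∈ S, ball (c i + v i) (r i) ⊆ square ((1 - ε) * a)) := by
  classical
  set A : Finset (Fin n) := Finset.univ.filter (fun i => 0 < r i) with hA
  have hAr : ∀ i ∈ A, 0 < r i := by
    intro i hi; rw [hA, Finset.mem_filter] at hi; exact hi.2
  have hbnd : ∀ i ∈ A, ∀ k : Fin 2, 0 ≤ c i k - r i ∧ c i k + r i ≤ a := by
    intro i hi k
    exact ball_coord_bounds (hAr i hi) (hsub i) k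
  obtain ⟨t, ht, BX, hBXA, hBXs, hBXw⟩ :=
    exists_good_cut hε0 ha A (fun i => c i 0 - r i) (fun i => c i 0 + r i) w hw
      (fun i hi => (hbnd i hi 0).1) (fun i hi => (hbnd i hi 0).2)
      (fun i hi => by have := hr i; dsimp only; linarith)
  obtain ⟨u, hu, BY, hBYA, hBYs, hBYw⟩ :=
    exists_good_cut hε0 ha A (fun i => c i 1 - r i) (fun i => c i 1 + r i) w hw
      (fun i hi => (hbnd i hi 1).1) (fun i hi => (hbnd i hi 1).2)
      (fun i hi => by have := hr i; dsimp only; linarith)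
  set S : Finset (Fin n) := Finset.univ \ (BX ∪ BY) with hS
  set δx : Fin n → ℝ :=
    fun i => if t + ε*a ≤ c i 0 - r i then -(t + ε*a) else (1-ε)*a - t with hδx
  set δy : Fin n → ℝ :=
    fun i => if u + ε*a ≤ c i 1 - r i then -(u + ε*a) else (1-ε)*a - u with hδy
  set v : Fin n → Plane :=
    fun i => (WithLp.equiv 2 (Fin 2 → ℝ)).symm ![δx i, δy i] with hv
  have hv0 : ∀ i, (v i) 0 = δx i := by
    intro i; rw [hv]; simp [WithLp.equiv_symm_apply]
  have hv1 : ∀ i, (v i) 1 = δy i := by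
    intro i; rw [hv]; simp [WithLp.equiv_symm_apply]
  have hSmem : ∀ i ∈ S, i ∉ BX ∧ i ∉ BY := by
    intro i hi
    rw [hS, Finset.mem_sdiff, Finset.mem_union] at hi
    exact ⟨fun h => hi.2 (Or.inl h), fun h => hi.2 (Or.inr h)⟩
  -- coordinate access for points of translated balls
  have hcoord : ∀ (q : Plane) (ρ : ℝ) (p : Plane), p ∈ ball q ρ → ∀ k : Fin 2,
      q k - ρ < p k ∧ p k < q k + ρ := by
    intro q ρ p hp k
    have h1 := coord_dist p q k
    rw [mem_ball] at hp
    have h2 := abs_lt.1 (lt_of_le_of_lt h1 hp)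
    constructor <;> [linarith [h2.1]; linarith [h2.2]]
  -- the key per-coordinate facts
  have main0 : ∀ i ∈ S, 0 < r i → ∀ p ∈ ball (c i + v i) (r i),
      (0 ≤ p 0 ∧ p 0 ≤ (1-ε)*a) ∧
      (t + ε*a ≤ c i 0 - r i → p 0 < a - ε*a - t) ∧
      (¬ (t + ε*a ≤ c i 0 - r i) → a - ε*a - t < p 0) := by
    intro i hiS hri p hp
    have hiA : i ∈ A := by rw [hA, Finset.mem_filter]; exact ⟨Finset.mem_univ _, hri⟩
    have hsurv := hBXs i hiA (hSmem i hiS).1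
    have hb := hbnd i hiA 0
    have hpc := hcoord _ _ p hp 0
    have hadd : (c i + v i) 0 = c i 0 + δx i := by
      rw [PiLp.add_apply, hv0]
    rw [hadd] at hpc
    have hδxi : δx i = if t + ε*a ≤ c i 0 - r i then -(t + ε*a) else (1-ε)*a - t := by
      rw [hδx]
    exact cut_1d hε0 ht.1 ht.2 hb.1 hb.2 (by linarith) hsurv.1 hsurv.2 (p 0)
      (by rw [← hδxi]; linarith) (by rw [← hδxi]; linarith)
  have main1 : ∀ i ∈ S, 0 < r i → ∀ p ∈ ball (c i + v i) (r i),
      (0 ≤ p 1 ∧ p 1 ≤ (1-ε)*a) ∧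
      (u + ε*a ≤ c i 1 - r i → p 1 < a - ε*a - u) ∧
      (¬ (u + ε*a ≤ c i 1 - r i) → a - ε*a - u < p 1) := by
    intro i hiS hri p hp
    have hiA : i ∈ A := by rw [hA, Finset.mem_filter]; exact ⟨Finset.mem_univ _, hri⟩
    have hsurv := hBYs i hiA (hSmem i hiS).2
    have hb := hbnd i hiA 1
    have hpc := hcoord _ _ p hp 1
    have hadd : (c i + v i) 1 = c i 1 + δy i := by
      rw [PiLp.add_apply, hv1]
    rw [hadd] at hpc
    have hδyi : δy i = if u + ε*a ≤ c i 1 - r i then -(u + ε*a) else (1-ε)*a - u := by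
      rw [hδy]
    exact cut_1d hε0 hu.1 hu.2 hb.1 hb.2 (by linarith) hsurv.1 hsurv.2 (p 1)
      (by rw [← hδyi]; linarith) (by rw [← hδyi]; linarith)
  refine ⟨S, v, ?_, ?_, ?_⟩
  · -- weight bound
    have h1 : ∑ i ∈ S, w i = ∑ i, w i - ∑ i ∈ BX ∪ BY, w i := by
      rw [hS, Finset.sum_sdiff_eq_sub (Finset.subset_univ _)]
    have h2 := Finset.sum_union_inter (s₁ := BX) (s₂ := BY) (f := w)
    have h3 : 0 ≤ ∑ i ∈ BX ∩ BY, w i := Finset.sum_nonneg (fun i _ => hw i)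
    have h4 : 0 ≤ ∑ i, w i := Finset.sum_nonneg (fun i _ => hw i)
    have h5 : ∑ i ∈ BX, w i ≤ 3 * ε * ∑ i, w i := hBXw
    have h6 : ∑ i ∈ BY, w i ≤ 3 * ε * ∑ i, w i := hBYw
    rw [h1]
    nlinarith
  · -- disjointness
    intro i hiS j hjS hij
    rcases le_or_gt (r i) 0 with hri | hri
    · rw [ball_eq_empty.2 hri]; exact disjoint_bot_left
    rcases le_or_gt (r j) 0 with hrj | hrj
    · rw [ball_eq_empty.2 hrj]; exact disjoint_bot_right
    by_cases hxx : (t + ε*a ≤ c i 0 - r i) ↔ (t + ε*a ≤ c j 0 - r j)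
    · by_cases hyy : (u + ε*a ≤ c i 1 - r i) ↔ (u + ε*a ≤ c j 1 - r j)
      · -- equal translation vectors
        have hδxe : δx i = δx j := by
          rw [hδx]; exact if_congr hxx rfl rfl
        have hδye : δy i = δy j := by
          rw [hδy]; exact if_congr hyy rfl rfl
        have hvv : v i = v j := by
          rw [hv]; simp only [hδxe, hδye]
        rw [Set.disjoint_left]
        intro x hxi hxj
        rw [hvv] at hxi
        have h1 : x - v j ∈ ball (c i) (r i) := by
          rw [mem_ball] at hxi ⊢
          have hd := dist_add_right (x - v j) (c i) (v j)
          rw [sub_add_cancel] at hd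
          rw [← hd]; exact hxi
        have h2 : x - v j ∈ ball (c j) (r j) := by
          rw [mem_ball] at hxj ⊢
          have hd := dist_add_right (x - v j) (c j) (v j)
          rw [sub_add_cancel] at hd
          rw [← hd]; exact hxj
        exact Set.disjoint_left.1 (hdisj i j hij) h1 h2
      · -- separation in coordinate 1
        rw [Set.disjoint_left]
        intro x hxi hxj
        have Hi := (main1 i hiS hri x hxi).2
        have Hj := (main1 j hjS hrj x hxj).2
        by_cases hci : u + ε*a ≤ c i 1 - r i
        · have hcj : ¬ (u + ε*a ≤ c j 1 - r j) := fun h => hyy (iff_of_true hci h)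
          linarith [Hi.1 hci, Hj.2 hcj]
        · have hcj : u + ε*a ≤ c j 1 - r j := by
            by_contra h
            exact hyy (iff_of_false hci h)
          linarith [Hi.2 hci, Hj.1 hcj]
    · -- separation in coordinate 0
      rw [Set.disjoint_left]
      intro x hxi hxj
      have Hi := (main0 i hiS hri x hxi).2
      have Hj := (main0 j hjS hrj x hxj).2
      by_cases hci : t + ε*a ≤ c i 0 - r i
      · have hcj : ¬ (t + ε*a ≤ c j 0 - r j) := fun h => hxx (iff_of_true hci h)
        linarith [Hi.1 hci, Hj.2 hcj]
      · have hcj : t + ε*a ≤ c j 0 - r j := by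
          by_contra h
          exact hxx (iff_of_false hci h)
        linarith [Hi.2 hci, Hj.1 hcj]
  · -- containment
    intro i hiS p hp
    rcases le_or_gt (r i) 0 with hri | hri
    · rw [ball_eq_empty.2 hri] at hp
      exact absurd hp (notMem_empty _)
    · have H0 := (main0 i hiS hri p hp).1
      have H1 := (main1 i hiS hri p hp).1
      exact ⟨⟨H0.1, H0.2⟩, ⟨H1.1, H1.2⟩⟩
end
end

section
/- Let α ∈ (0, π/2] and ℓ > 0. Let v, u₁, u₂ be points of the closed nonnegative quadrant [0,∞)² ⊆ ℝ² such that ‖u₁ − v‖ ≥ ℓ, ‖u₂ − v‖ ≥ ℓ, and the angle between the vectors u₁ − v and u₂ − v is at least π/2 + α. Then max(v₁, v₂) ≥ ℓ·sin(α)/2, where v = (v₁, v₂). -/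
open Metric Set Real
open scoped RealInnerProductSpace

noncomputable section

lemma aux_prod_lb (a b m M : ℝ) (hm : 0 < m) (hM : 0 < M)
    (ha : -m < a) (hb : -m < b) (ha2 : a ^ 2 ≤ M ^ 2) (hb2 : b ^ 2 ≤ M ^ 2) :
    -(m * M) < a * b := by
  have haM : a ≤ M := by nlinarith
  have hbM : b ≤ M := by nlinarith
  rcases le_or_gt 0 a with h | h
  · rcases le_or_gt 0 b with h' | h'
    · nlinarith
    · nlinarith
  · nlinarith

lemma corner_arith (m ℓ n₁ n₂ a b c d s : ℝ)
    (hℓ : 0 < ℓ) (hs : 0 < s)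
    (hn1 : ℓ ≤ n₁) (hn2 : ℓ ≤ n₂)
    (h1 : n₁ ^ 2 = a ^ 2 + b ^ 2) (h2 : n₂ ^ 2 = c ^ 2 + d ^ 2)
    (ha : -m < a) (hb : -m < b) (hc : -m < c) (hd : -m < d)
    (hinner : a * c + b * d ≤ -s * (n₁ * n₂))
    (hms : m = ℓ * s / 2) : False := by
  have hm : 0 < m := by rw [hms]; positivity
  obtain ⟨M, hM_def⟩ : ∃ M, M = max n₁ n₂ := ⟨_, rfl⟩
  have hn1' : 0 < n₁ := lt_of_lt_of_le hℓ hn1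
  have hn2' : 0 < n₂ := lt_of_lt_of_le hℓ hn2
  have hM1 : n₁ ≤ M := hM_def ▸ le_max_left _ _
  have hM2 : n₂ ≤ M := hM_def ▸ le_max_right _ _
  have hMpos : 0 < M := lt_of_lt_of_le hn1' hM1
  have hMsq1 : n₁ ^ 2 ≤ M ^ 2 := by nlinarith
  have hMsq2 : n₂ ^ 2 ≤ M ^ 2 := by nlinarith
  have t0 : -(m * M) < a * c :=
    aux_prod_lb _ _ _ _ hm hMpos ha hc (by nlinarith [sq_nonneg b]) (by nlinarith [sq_nonneg d])
  have t1 : -(m * M) < b * d :=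
    aux_prod_lb _ _ _ _ hm hMpos hb hd (by nlinarith [sq_nonneg a]) (by nlinarith [sq_nonneg c])
  have hprod : ℓ * M ≤ n₁ * n₂ := by
    rcases le_total n₁ n₂ with h | h
    · rw [hM_def, max_eq_right h]
      exact mul_le_mul_of_nonneg_right hn1 hn2'.le
    · rw [hM_def, max_eq_left h]
      calc ℓ * n₁ ≤ n₂ * n₁ := mul_le_mul_of_nonneg_right hn2 hn1'.le
        _ = n₁ * n₂ := mul_comm _ _
  have hstep : s * (ℓ * M) ≤ s * (n₁ * n₂) := mul_le_mul_of_nonneg_left hprod hs.le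
  have h2m : 2 * (m * M) = s * (ℓ * M) := by rw [hms]; ring
  linarith

lemma plane_norm_sq (x : Plane) : ‖x‖ ^ 2 = x 0 ^ 2 + x 1 ^ 2 := by
  rw [EuclideanSpace.norm_eq, Real.sq_sqrt (by positivity), Fin.sum_univ_two]
  simp [sq_abs]

lemma plane_inner_eq (x y : Plane) : ⟪x, y⟫ = x 0 * y 0 + x 1 * y 1 := by
  simp [PiLp.inner_apply, Fin.sum_univ_two, RCLike.inner_apply, mul_comm]

/-- Vertex-in-corner case of Lemma 4.7: let `α ∈ (0, π/2]`, `ℓ > 0`, and let `v, u₁, u₂`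
lie in the closed nonnegative quadrant with `‖u₁ − v‖ ≥ ℓ`, `‖u₂ − v‖ ≥ ℓ`, and the
angle between `u₁ − v` and `u₂ − v` at least `π/2 + α`. Then
`max(v₁, v₂) ≥ ℓ·sin(α)/2`. -/
theorem vertex_of_wide_angle_not_in_corner
    (α ℓ : ℝ) (hα0 : 0 < α) (hα1 : α ≤ π / 2) (hℓ : 0 < ℓ)
    (v u₁ u₂ : Plane)
    (hv : 0 ≤ v 0 ∧ 0 ≤ v 1) (hu₁ : 0 ≤ u₁ 0 ∧ 0 ≤ u₁ 1) (hu₂ : 0 ≤ u₂ 0 ∧ 0 ≤ u₂ 1)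
    (hd1 : ℓ ≤ ‖u₁ - v‖) (hd2 : ℓ ≤ ‖u₂ - v‖)
    (hangle : π / 2 + α ≤ InnerProductGeometry.angle (u₁ - v) (u₂ - v)) :
    ℓ * Real.sin α / 2 ≤ max (v 0) (v 1) := by
  by_contra hcon
  push_neg at hcon
  have hv0 : v 0 < ℓ * Real.sin α / 2 := lt_of_le_of_lt (le_max_left _ _) hcon
  have hv1 : v 1 < ℓ * Real.sin α / 2 := lt_of_le_of_lt (le_max_right _ _) hcon
  have hsin : 0 < Real.sin α :=
    Real.sin_pos_of_pos_of_lt_pi hα0 (by linarith [Real.pi_gt_three])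
  have hn1 : 0 < ‖u₁ - v‖ := lt_of_lt_of_le hℓ hd1
  have hn2 : 0 < ‖u₂ - v‖ := lt_of_lt_of_le hℓ hd2
  have hcos : Real.cos (InnerProductGeometry.angle (u₁ - v) (u₂ - v)) ≤ Real.cos (π / 2 + α) :=
    Real.cos_le_cos_of_nonneg_of_le_pi (by positivity)
      (InnerProductGeometry.angle_le_pi _ _) hangle
  have hcpa : Real.cos (π / 2 + α) = -Real.sin α := by
    rw [Real.cos_add]; simp
  rw [hcpa, InnerProductGeometry.cos_angle] at hcos
  have hinner : ⟪u₁ - v, u₂ - v⟫ ≤ -Real.sin α * (‖u₁ - v‖ * ‖u₂ - v‖) := by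
    rw [div_le_iff₀ (by positivity)] at hcos
    linarith [hcos]
  have hsub1 : ∀ i, (u₁ - v) i = u₁ i - v i := fun i => rfl
  have hsub2 : ∀ i, (u₂ - v) i = u₂ i - v i := fun i => rfl
  have e1 : ‖u₁ - v‖ ^ 2 = (u₁ 0 - v 0) ^ 2 + (u₁ 1 - v 1) ^ 2 := by
    rw [plane_norm_sq, hsub1 0, hsub1 1]
  have e2 : ‖u₂ - v‖ ^ 2 = (u₂ 0 - v 0) ^ 2 + (u₂ 1 - v 1) ^ 2 := by
    rw [plane_norm_sq, hsub2 0, hsub2 1]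
  have ei : ⟪u₁ - v, u₂ - v⟫ =
      (u₁ 0 - v 0) * (u₂ 0 - v 0) + (u₁ 1 - v 1) * (u₂ 1 - v 1) := by
    rw [plane_inner_eq, hsub1 0, hsub1 1, hsub2 0, hsub2 1]
  rw [ei] at hinner
  exact corner_arith (ℓ * Real.sin α / 2) ℓ ‖u₁ - v‖ ‖u₂ - v‖
    (u₁ 0 - v 0) (u₁ 1 - v 1) (u₂ 0 - v 0) (u₂ 1 - v 1) (Real.sin α)
    hℓ hsin hd1 hd2 e1 e2
    (by linarith [hu₁.1]) (by linarith [hu₁.2]) (by linarith [hu₂.1]) (by linarith [hu₂.2])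
    hinner rfl
end
end

section
/- Let d ≥ 1 be an integer, ε ∈ (0, 1/(3d)], a > 0, and let B(c₁,r₁),…,B(cₙ,rₙ) be pairwise disjoint open balls in Euclidean ℝ^d contained in the cube [0,a]^d, with radii rᵢ ≤ ε·a and associated profits w₁,…,wₙ ≥ 0. Then there exist a subset S ⊆ {1,…,n} with Σ_{i∈S} wᵢ ≥ (1 − 3dε)·Σ_{i=1}^n wᵢ and translation vectors vᵢ ∈ ℝ^d for i ∈ S such that the translated balls B(cᵢ + vᵢ, rᵢ), i ∈ S, are pairwise disjoint and all contained in [0,(1−ε)·a]^d. -/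
open Metric Set

noncomputable section

/-- The axis-parallel cube `[0,t]^d` in Euclidean space ℝ^d. -/
def cube (d : ℕ) (t : ℝ) : Set (EuclideanSpace ℝ (Fin d)) :=
  {x | ∀ i, x i ∈ Icc (0:ℝ) t}

/-- coordinate distance is at most the Euclidean distance -/
lemma coord_abs_le_dist {d : ℕ} (x y : EuclideanSpace ℝ (Fin d)) (k : Fin d) :
    |x k - y k| ≤ dist x y := by
  rw [EuclideanSpace.dist_eq]
  have h1 : |x k - y k| = Real.sqrt ((x k - y k) ^ 2) := (Real.sqrt_sq_eq_abs _).symm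
  rw [h1]
  apply Real.sqrt_le_sqrt
  have := Finset.single_le_sum (f := fun i => dist (x i) (y i) ^ 2)
    (fun i _ => sq_nonneg _) (Finset.mem_univ k)
  simpa [Real.dist_eq] using this

/-- a nonempty ball inside the cube has its center coordinates in `[r, a-r]` -/
lemma center_bounds {d : ℕ} {a rr : ℝ} {ci : EuclideanSpace ℝ (Fin d)}
    (hrr : 0 < rr) (hs : ball ci rr ⊆ cube d a) (k : Fin d) :
    rr ≤ ci k ∧ ci k + rr ≤ a := by
  classical
  have hmem : ∀ s : ℝ, |s| < rr → (0 ≤ ci k + s ∧ ci k + s ≤ a) := by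
    intro s hsr
    have hball : (ci + s • EuclideanSpace.single k (1:ℝ)) ∈ ball ci rr := by
      rw [mem_ball, dist_self_add_left, norm_smul, EuclideanSpace.norm_single]
      simpa [Real.norm_eq_abs] using hsr
    have h2 := hs hball k
    have hco : (ci + s • EuclideanSpace.single k (1:ℝ)) k = ci k + s := by
      simp [EuclideanSpace.single_apply]
    rw [hco] at h2
    exact ⟨h2.1, h2.2⟩
  have h0 := hmem 0 (by simpa using hrr)
  simp at h0
  constructor
  · by_contra hcon
    push_neg at hcon
    have h1 := hmem (-(ci k + rr) / 2) (by
      rw [abs_of_nonpos (by linarith [h0.1])]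
      linarith)
    linarith [h1.1]
  · by_contra hcon
    push_neg at hcon
    have h1 := hmem ((a - ci k + rr) / 2) (by
      rw [abs_of_nonneg (by linarith [h0.2])]
      linarith)
    linarith [h1.2]

/-- averaging lemma: there is a choice of slab position removing at most a `3ε`-fraction -/
lemma exists_good_t {n : ℕ} {a ε : ℝ} (ha : 0 < a) (hε : 0 ≤ ε)
    (w : Fin n → ℝ) (hw : ∀ i, 0 ≤ w i) (Bad : Fin n → Set ℝ)
    (hm : ∀ i, MeasurableSet (Bad i))
    (hμ : ∀ i, MeasureTheory.volume (Bad i ∩ Ioc 0 a) ≤ ENNReal.ofReal (3 * ε * a)) :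
    ∃ t ∈ Ioc (0:ℝ) a,
      ∑ i, (Bad i).indicator (fun _ => w i) t ≤ 3 * ε * ∑ i, w i := by
  classical
  by_contra hcon
  push_neg at hcon
  set W := ∑ i, w i with hWdef
  set f : ℝ → ℝ := fun t => ∑ i, (Bad i).indicator (fun _ => w i) t with hf
  have hint_i : ∀ i : Fin n,
      MeasureTheory.IntegrableOn ((Bad i).indicator (fun _ => w i)) (Ioc 0 a) := by
    intro i
    exact MeasureTheory.Integrable.indicator
      (MeasureTheory.integrableOn_const measure_Ioc_lt_top.ne) (hm i)
  have hintf : MeasureTheory.IntegrableOn f (Ioc 0 a) :=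
    MeasureTheory.integrable_finset_sum _ (fun i _ => hint_i i)
  have hIf : ∫ t in Ioc (0:ℝ) a, f t =
      ∑ i, (MeasureTheory.volume (Ioc (0:ℝ) a ∩ Bad i)).toReal * w i := by
    rw [MeasureTheory.integral_finset_sum _ (fun i _ => hint_i i)]
    refine Finset.sum_congr rfl fun i _ => ?_
    rw [MeasureTheory.setIntegral_indicator (hm i), MeasureTheory.setIntegral_const,
      smul_eq_mul, MeasureTheory.measureReal_def]
  have hIf_le : ∫ t in Ioc (0:ℝ) a, f t ≤ 3 * ε * a * W := by
    rw [hIf, hWdef, Finset.mul_sum]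
    refine Finset.sum_le_sum fun i _ => ?_
    refine mul_le_mul_of_nonneg_right ?_ (hw i)
    have h1 : MeasureTheory.volume (Ioc (0:ℝ) a ∩ Bad i) ≤ ENNReal.ofReal (3 * ε * a) := by
      rw [Set.inter_comm]; exact hμ i
    calc (MeasureTheory.volume (Ioc (0:ℝ) a ∩ Bad i)).toReal
        ≤ (ENNReal.ofReal (3 * ε * a)).toReal :=
          ENNReal.toReal_mono ENNReal.ofReal_ne_top h1
      _ = 3 * ε * a := ENNReal.toReal_ofReal (by positivity)
  have hintc : MeasureTheory.IntegrableOn (fun _ : ℝ => 3 * ε * W) (Ioc 0 a) :=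
    MeasureTheory.integrableOn_const measure_Ioc_lt_top.ne
  have hg : MeasureTheory.IntegrableOn (fun t => f t - 3 * ε * W) (Ioc 0 a) :=
    hintf.sub hintc
  have hpos : 0 < ∫ t in Ioc (0:ℝ) a, (f t - 3 * ε * W) := by
    rw [MeasureTheory.setIntegral_pos_iff_support_of_nonneg_ae ?_ hg]
    · refine lt_of_lt_of_le ?_ (MeasureTheory.measure_mono
        (Set.subset_inter (fun t ht => ?_) (subset_refl (Ioc (0:ℝ) a))))
      · rw [Real.volume_Ioc]
        simpa using ha
      · have := hcon t ht
        simp only [Function.mem_support]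
        intro h0
        have : f t = 3 * ε * W := by linarith [sub_eq_zero.mp h0]
        linarith [hcon t ht]
    · refine (MeasureTheory.ae_restrict_iff' measurableSet_Ioc).2
        (MeasureTheory.ae_of_all _ fun t ht => ?_)
      have := hcon t ht
      simp only [Pi.zero_apply]
      linarith
  rw [MeasureTheory.integral_sub hintf hintc, MeasureTheory.setIntegral_const,
    MeasureTheory.measureReal_def, Real.volume_Ioc, sub_zero, ENNReal.toReal_ofReal ha.le, smul_eq_mul] at hpos
  have hring : 3 * ε * a * W = a * (3 * ε * W) := by ring
  linarith

/-- d-dimensional random-slab averaging lemma (Lemma B.4): given pairwise disjoint open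
balls in `[0,a]^d` with radii at most `ε·a` (where `ε ≤ 1/(3d)`) and nonnegative
profits, a subset carrying at least a `(1−3dε)`-fraction of the total profit can be
translated so that the translated balls are pairwise disjoint and contained in the
shrunken cube `[0,(1−ε)·a]^d`. -/
theorem small_balls_fit_in_shrunken_cube
    (d : ℕ) (hd : 1 ≤ d) (ε : ℝ) (hε0 : 0 < ε) (hε1 : ε ≤ 1 / (3 * d))
    (a : ℝ) (ha : 0 < a)
    (n : ℕ) (c : Fin n → EuclideanSpace ℝ (Fin d)) (r : Fin n → ℝ)
    (hr : ∀ i, r i ≤ ε * a)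
    (hdisj : ∀ i j, i ≠ j → Disjoint (ball (c i) (r i)) (ball (c j) (r j)))
    (hsub : ∀ i, ball (c i) (r i) ⊆ cube d a)
    (w : Fin n → ℝ) (hw : ∀ i, 0 ≤ w i) :
    ∃ (S : Finset (Fin n)) (v : Fin n → EuclideanSpace ℝ (Fin d)),
      (1 - 3 * d * ε) * ∑ i, w i ≤ ∑ i ∈ S, w i ∧
      (∀ i ∈ S, ∀ j ∈ S, i ≠ j →
        Disjoint (ball (c i + v i) (r i)) (ball (c j + v j) (r j))) ∧
      (∀ i ∈ S, ball (c i + v i) (r i) ⊆ cube d ((1 - ε) * a)) := by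
  classical
  set W := ∑ i, w i with hWdef
  -- the bad parameter set for ball i in direction k
  set Bad : Fin d → Fin n → Set ℝ := fun k i =>
    if 0 < r i then
      Ioo (c i k - r i - ε * a) (c i k + r i) ∪ Ioi (c i k - r i - ε * a + a)
    else (∅ : Set ℝ) with hBad
  -- center bounds
  have hcb : ∀ i, 0 < r i → ∀ k, r i ≤ c i k ∧ c i k + r i ≤ a :=
    fun i hri k => center_bounds hri (hsub i) k
  -- measure bound for Bad k i
  have hμ : ∀ k i, MeasureTheory.volume (Bad k i ∩ Ioc 0 a) ≤ ENNReal.ofReal (3 * ε * a) := by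
    intro k i
    rw [hBad]
    by_cases hri : 0 < r i
    · simp only [if_pos hri]
      obtain ⟨hlo, hhi⟩ := hcb i hri k
      set ci := c i k
      set ri := r i
      set h := ε * a
      have hh : 0 < h := by positivity
      have hsplit : (Ioo (ci - ri - h) (ci + ri) ∪ Ioi (ci - ri - h + a)) ∩ Ioc 0 a
          ⊆ (Ioo (ci - ri - h) (ci + ri) ∩ Ioc 0 a) ∪ (Ioc (ci - ri - h + a) a) := by
        rintro x ⟨hx1 | hx2, hx3⟩
        · exact Or.inl ⟨hx1, hx3⟩
        · exact Or.inr ⟨hx2, hx3.2⟩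
      refine le_trans (MeasureTheory.measure_mono hsplit) ?_
      refine le_trans (MeasureTheory.measure_union_le (μ := MeasureTheory.volume) _ _) ?_
      have hbound : ri ≤ h := hr i
      by_cases hc : ci < ri + h
      · -- ball near left edge: first piece ⊆ Ioo 0 (ci+ri), second has length ri+h-ci
        have h1 : Ioo (ci - ri - h) (ci + ri) ∩ Ioc 0 a ⊆ Ioo 0 (ci + ri) := by
          rintro x ⟨hx1, hx2⟩; exact ⟨hx2.1, hx1.2⟩
        have h2 := MeasureTheory.measure_mono (μ := MeasureTheory.volume) h1
        rw [Real.volume_Ioo] at h2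
        have h3 : MeasureTheory.volume (Ioc (ci - ri - h + a) a)
            = ENNReal.ofReal (ri + h - ci) := by
          rw [Real.volume_Ioc]; ring_nf
        rw [h3]
        calc MeasureTheory.volume (Ioo (ci - ri - h) (ci + ri) ∩ Ioc 0 a)
              + ENNReal.ofReal (ri + h - ci)
            ≤ ENNReal.ofReal (ci + ri - 0) + ENNReal.ofReal (ri + h - ci) := by
              exact add_le_add h2 le_rfl
          _ = ENNReal.ofReal ((ci + ri - 0) + (ri + h - ci)) := by
              rw [ENNReal.ofReal_add (by linarith) (by linarith)]
          _ ≤ ENNReal.ofReal (3 * ε * a) := by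
              apply ENNReal.ofReal_le_ofReal
              have : h = ε * a := rfl
              linarith
      · push_neg at hc
        have h1 : Ioo (ci - ri - h) (ci + ri) ∩ Ioc 0 a ⊆ Ioo (ci - ri - h) (ci + ri) :=
          Set.inter_subset_left
        have h2 := MeasureTheory.measure_mono (μ := MeasureTheory.volume) h1
        rw [Real.volume_Ioo] at h2
        have h3 : MeasureTheory.volume (Ioc (ci - ri - h + a) a) = 0 := by
          rw [Real.volume_Ioc, ENNReal.ofReal_eq_zero]
          linarith
        rw [h3, add_zero]
        refine le_trans h2 (ENNReal.ofReal_le_ofReal ?_)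
        have : h = ε * a := rfl
        linarith
    · simp [if_neg hri]
  have hmeas : ∀ k i, MeasurableSet (Bad k i) := by
    intro k i
    rw [hBad]
    by_cases hri : 0 < r i
    · simp only [if_pos hri]
      exact (measurableSet_Ioo.union measurableSet_Ioi)
    · simp [if_neg hri]
  -- choose good slab positions
  have hgood : ∀ k : Fin d, ∃ t ∈ Ioc (0:ℝ) a,
      ∑ i, (Bad k i).indicator (fun _ => w i) t ≤ 3 * ε * W :=
    fun k => exists_good_t ha hε0.le w hw (Bad k) (hmeas k) (hμ k)
  choose t ht1 ht2 using hgood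
  -- the surviving set
  set S : Finset (Fin n) := Finset.univ.filter (fun i => ∀ k, t k ∉ Bad k i) with hS
  -- the translation vectors
  set v : Fin n → EuclideanSpace ℝ (Fin d) := fun i =>
    WithLp.toLp 2 (fun k => if c i k + r i ≤ t k then
        (if t k + ε * a ≤ a then 0 else a - t k - ε * a)
      else -(ε * a)) with hv
  have hvapp : ∀ i (k : Fin d), (c i + v i) k = c i k + v i k := fun i k => rfl
  -- facts about survivors
  have hnh : ∀ i ∈ S, 0 < r i → ∀ k,
      (¬(c i k - r i - ε * a < t k ∧ t k < c i k + r i)) ∧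
        t k ≤ c i k - r i - ε * a + a := by
    intro i hiS hri k
    have hmem : t k ∉ Bad k i := (Finset.mem_filter.mp hiS).2 k
    rw [hBad] at hmem
    simp only [if_pos hri, Set.mem_union, Set.mem_Ioo, Set.mem_Ioi, not_or] at hmem
    exact ⟨hmem.1, not_lt.mp hmem.2⟩
  -- containment bounds for survivors
  have hK : ∀ i ∈ S, 0 < r i → ∀ k,
      r i ≤ c i k + v i k ∧ c i k + v i k + r i ≤ a - ε * a := by
    intro i hiS hri k
    obtain ⟨hlo, hhi⟩ := hcb i hri k
    obtain ⟨nh1, nh2⟩ := hnh i hiS hri k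
    have htk1 : 0 < t k := (ht1 k).1
    have htk2 : t k ≤ a := (ht1 k).2
    have hvik : v i k = (if c i k + r i ≤ t k then
        (if t k + ε * a ≤ a then (0:ℝ) else a - t k - ε * a) else -(ε * a)) := rfl
    rw [hvik]
    by_cases hb : c i k + r i ≤ t k
    · by_cases hb2 : t k + ε * a ≤ a
      · rw [if_pos hb, if_pos hb2]
        constructor <;> linarith
      · rw [if_pos hb, if_neg hb2]
        constructor <;> linarith
    · rw [if_neg hb]
      push_neg at hb
      have hleft : t k ≤ c i k - r i - ε * a := by
        by_contra hcon
        push_neg at hcon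
        exact nh1 ⟨hcon, hb⟩
      constructor <;> linarith
  -- separation claim
  have hsep : ∀ i ∈ S, ∀ j ∈ S, 0 < r i → 0 < r j → ∀ k, v i k ≠ v j k →
      (c i k + v i k + r i ≤ t k ∧ t k ≤ c j k + v j k - r j) ∨
      (c j k + v j k + r j ≤ t k ∧ t k ≤ c i k + v i k - r i) := by
    have main : ∀ i ∈ S, ∀ j ∈ S, 0 < r i → 0 < r j → ∀ k,
        c i k + r i ≤ t k → ¬(c j k + r j ≤ t k) →
        c i k + v i k + r i ≤ t k ∧ t k ≤ c j k + v j k - r j := by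
      intro i hiS j hjS hri hrj k hi hj
      push_neg at hj
      obtain ⟨nh1j, nh2j⟩ := hnh j hjS hrj k
      obtain ⟨hloj, hhij⟩ := hcb j hrj k
      have hleftj : t k ≤ c j k - r j - ε * a := by
        by_contra hcon
        push_neg at hcon
        exact nh1j ⟨hcon, hj⟩
      have hb2 : t k + ε * a ≤ a := by linarith
      have hvj : v j k = -(ε * a) := by
        have e : v j k = (if c j k + r j ≤ t k then
          (if t k + ε * a ≤ a then (0:ℝ) else a - t k - ε * a) else -(ε * a)) := rfl
        rw [e, if_neg (not_le.mpr hj)]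
      have hvi : v i k = 0 := by
        have e : v i k = (if c i k + r i ≤ t k then
          (if t k + ε * a ≤ a then (0:ℝ) else a - t k - ε * a) else -(ε * a)) := rfl
        rw [e, if_pos hi, if_pos hb2]
      rw [hvi, hvj]
      constructor <;> linarith
    intro i hiS j hjS hri hrj k hne
    by_cases hi : c i k + r i ≤ t k <;> by_cases hj : c j k + r j ≤ t k
    · exfalso
      apply hne
      have ei : v i k = (if c i k + r i ≤ t k then
        (if t k + ε * a ≤ a then (0:ℝ) else a - t k - ε * a) else -(ε * a)) := rfl
      have ej : v j k = (if c j k + r j ≤ t k then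
        (if t k + ε * a ≤ a then (0:ℝ) else a - t k - ε * a) else -(ε * a)) := rfl
      rw [ei, ej, if_pos hi, if_pos hj]
    · exact Or.inl (main i hiS j hjS hri hrj k hi hj)
    · exact Or.inr (main j hjS i hiS hrj hri k hj hi)
    · exfalso
      apply hne
      have ei : v i k = (if c i k + r i ≤ t k then
        (if t k + ε * a ≤ a then (0:ℝ) else a - t k - ε * a) else -(ε * a)) := rfl
      have ej : v j k = (if c j k + r j ≤ t k then
        (if t k + ε * a ≤ a then (0:ℝ) else a - t k - ε * a) else -(ε * a)) := rfl
      rw [ei, ej, if_neg hi, if_neg hj]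
  refine ⟨S, v, ?_, ?_, ?_⟩
  · -- profit bound
    have hsplit := Finset.sum_filter_add_sum_filter_not Finset.univ
      (fun i => ∀ k, t k ∉ Bad k i) w
    have hbound : ∑ i ∈ Finset.univ.filter (fun i => ¬ ∀ k, t k ∉ Bad k i), w i
        ≤ (d : ℝ) * (3 * ε * W) := by
      calc ∑ i ∈ Finset.univ.filter (fun i => ¬ ∀ k, t k ∉ Bad k i), w i
          ≤ ∑ i ∈ Finset.univ.filter (fun i => ¬ ∀ k, t k ∉ Bad k i),
              ∑ k : Fin d, (if t k ∈ Bad k i then w i else 0) := by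
            refine Finset.sum_le_sum fun i hi => ?_
            rw [Finset.mem_filter] at hi
            push_neg at hi
            obtain ⟨k0, hk0⟩ := hi.2
            have := Finset.single_le_sum
              (f := fun k => if t k ∈ Bad k i then w i else 0)
              (fun k _ => by by_cases h : t k ∈ Bad k i <;> simp [h, hw i]) (Finset.mem_univ k0)
            simpa [hk0] using this
        _ ≤ ∑ i : Fin n, ∑ k : Fin d, (if t k ∈ Bad k i then w i else 0) := by
            refine Finset.sum_le_sum_of_subset_of_nonneg (Finset.filter_subset _ _)
              fun i _ _ => Finset.sum_nonneg fun k _ => by by_cases h : t k ∈ Bad k i <;> simp [h, hw i]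
        _ = ∑ k : Fin d, ∑ i : Fin n, (if t k ∈ Bad k i then w i else 0) :=
            Finset.sum_comm
        _ = ∑ k : Fin d, ∑ i : Fin n, (Bad k i).indicator (fun _ => w i) (t k) := by
            refine Finset.sum_congr rfl fun k _ => Finset.sum_congr rfl fun i _ => ?_
            rw [Set.indicator_apply]
        _ ≤ ∑ _k : Fin d, 3 * ε * W := Finset.sum_le_sum fun k _ => ht2 k
        _ = (d : ℝ) * (3 * ε * W) := by
            rw [Finset.sum_const, Finset.card_univ, Fintype.card_fin, nsmul_eq_mul]
    have : (1 - 3 * d * ε) * W = W - (d : ℝ) * (3 * ε * W) := by ring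
    rw [this]
    have hSsum : ∑ i ∈ S, w i = W - ∑ i ∈ Finset.univ.filter
        (fun i => ¬ ∀ k, t k ∉ Bad k i), w i := by
      rw [hS]; linarith [hsplit]
    rw [hSsum]
    linarith
  · -- disjointness
    intro i hiS j hjS hij
    by_cases hri : 0 < r i
    · by_cases hrj : 0 < r j
      · by_cases hvij : v i = v j
        · -- same translation: use original disjointness
          have hd0 := hdisj i j hij
          rw [Set.disjoint_left]
          intro x hx1 hx2
          have hx1' : x - v i ∈ ball (c i) (r i) := by
            rw [mem_ball] at hx1 ⊢
            have : x - v i - c i = x - (c i + v i) := by abel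
            rw [dist_eq_norm, this, ← dist_eq_norm]
            exact hx1
          have hx2' : x - v i ∈ ball (c j) (r j) := by
            rw [mem_ball] at hx2 ⊢
            have : x - v i - c j = x - (c j + v j) := by rw [hvij]; abel
            rw [dist_eq_norm, this, ← dist_eq_norm]
            exact hx2
          exact Set.disjoint_left.mp hd0 hx1' hx2'
        · -- different translation in some coordinate: separated by hyperplane
          have : ∃ k, v i k ≠ v j k := by
            by_contra hcon
            push_neg at hcon
            exact hvij (PiLp.ext hcon)
          obtain ⟨k, hk⟩ := this
          rw [Set.disjoint_left]
          intro x hx1 hx2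
          have h1 : |x k - (c i k + v i k)| < r i := by
            have := coord_abs_le_dist x (c i + v i) k
            rw [hvapp] at this
            exact lt_of_le_of_lt this (mem_ball.mp hx1)
          have h2 : |x k - (c j k + v j k)| < r j := by
            have := coord_abs_le_dist x (c j + v j) k
            rw [hvapp] at this
            exact lt_of_le_of_lt this (mem_ball.mp hx2)
          rw [abs_lt] at h1 h2
          rcases hsep i hiS j hjS hri hrj k hk with ⟨ha1, ha2⟩ | ⟨ha1, ha2⟩ <;> linarith
      · have : ball (c j + v j) (r j) = ∅ := ball_eq_empty.mpr (not_lt.mp hrj)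
        rw [this]; exact disjoint_empty _
    · have : ball (c i + v i) (r i) = ∅ := ball_eq_empty.mpr (not_lt.mp hri)
      rw [this]; exact empty_disjoint _
  · -- containment
    intro i hiS x hx k
    by_cases hri : 0 < r i
    · obtain ⟨hK1, hK2⟩ := hK i hiS hri k
      have h1 : |x k - (c i k + v i k)| < r i := by
        have := coord_abs_le_dist x (c i + v i) k
        rw [hvapp] at this
        exact lt_of_le_of_lt this (mem_ball.mp hx)
      rw [abs_lt] at h1
      constructor
      · linarith
      · have : (1 - ε) * a = a - ε * a := by ring
        rw [this]
        linarith
    · exact absurd hx (by rw [ball_eq_empty.mpr (not_lt.mp hri)]; exact notMem_empty x)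
end
end
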